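/- arXiv:2212.06446 — 2 statements merged into one kernel-verified Lean document; each statement's English description precedes it below -/
import Mathlib

section
/- Assume σ∨ is pointed. The primitive lattice vectors on distinct affine rays of σ∨ are linearly independent over ℚ; in particular, no nonzero vector on a fixed affine ray is a linear combination of vectors lying on the other affine rays. -/
set_option synthInstance.maxHeartbeats 1000000
set_option maxHeartbeats 1000000

noncomputable section

namespace ToricML

open Finsupp

/-- The Laurent polynomial algebra `K[M]`, where `M = ℤⁿ`. -/
abbrev Laurent (K : Type) [Field K] (n : ℕ) := AddMonoidAlgebra K (Fin n → ℤ)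

/-- The character `χ^m` in `K[M]`. -/
def chi (K : Type) [Field K] (n : ℕ) (m : Fin n → ℤ) : Laurent K n := AddMonoidAlgebra.single m 1

/-- The monoid algebra `K[P] = ⊕_{m ∈ P} K·χ^m` as a subalgebra of `K[M]`. -/
def monAlg (K : Type) [Field K] (n : ℕ) (P : AddSubmonoid (Fin n → ℤ)) :
    Subalgebra K (Laurent K n) where
  carrier := {f | ∀ m ∈ f.coeff.support, m ∈ P}
  mul_mem' := by
    classical
    intro a b ha hb m hm
    have h := AddMonoidAlgebra.support_coeff_mul_subset a b hm
    rw [Finset.mem_add] at h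
    obtain ⟨x, hx, y, hy, rfl⟩ := h
    exact P.add_mem (ha _ hx) (hb _ hy)
  add_mem' := by
    intro a b ha hb m hm
    rcases Finset.mem_union.mp (Finsupp.support_add hm) with h | h
    · exact ha _ h
    · exact hb _ h
  algebraMap_mem' := by
    intro c m hm
    rw [AddMonoidAlgebra.coe_algebraMap] at hm
    have := Finsupp.support_single_subset hm
    rw [Finset.mem_singleton] at this
    rw [this]
    exact P.zero_mem

lemma chi_mem (K : Type) [Field K] (n : ℕ) (P : AddSubmonoid (Fin n → ℤ))
    {m : Fin n → ℤ} (hm : m ∈ P) : chi K n m ∈ monAlg K n P := by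
  intro x hx
  have := Finsupp.support_single_subset hx
  rw [Finset.mem_singleton] at this
  rwa [this]

/-- The character `χ^m` as an element of `K[P]`. -/
def chiP (K : Type) [Field K] (n : ℕ) (P : AddSubmonoid (Fin n → ℤ))
    (m : Fin n → ℤ) (hm : m ∈ P) : monAlg K n P :=
  ⟨chi K n m, chi_mem K n P hm⟩

/-- A derivation is locally nilpotent if every element is killed by some power. -/
def IsLND {R A : Type*} [CommRing R] [CommRing A] [Algebra R A]
    (δ : Derivation R A A) : Prop :=
  ∀ f : A, ∃ k : ℕ, (δ.toLinearMap ^ k) f = 0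

/-- A slice of a derivation is an element mapped to `1`. -/
def HasSlice {R A : Type*} [CommRing R] [CommRing A] [Algebra R A]
    (δ : Derivation R A A) : Prop :=
  ∃ s : A, δ s = 1

/-- A derivation of `K[P]` is `M`-homogeneous of degree `e` if it maps `K·χ^m`
into `K·χ^{m+e}` for all `m ∈ P`. -/
def IsHomog (K : Type) [Field K] (n : ℕ) (P : AddSubmonoid (Fin n → ℤ))
    (δ : Derivation K (monAlg K n P) (monAlg K n P)) (e : Fin n → ℤ) : Prop :=
  ∀ (m : Fin n → ℤ) (hm : m ∈ P), ∃ c : K,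
    ((δ (chiP K n P m hm) : monAlg K n P) : Laurent K n) = AddMonoidAlgebra.single (m + e) c

/-- The Makar-Limanov invariant of `K[P]`: intersection of kernels of all LNDs. -/
def ML (K : Type) [Field K] (n : ℕ) (P : AddSubmonoid (Fin n → ℤ)) :
    Set (monAlg K n P) :=
  {f | ∀ δ : Derivation K (monAlg K n P) (monAlg K n P), IsLND δ → δ f = 0}

/-- The homogeneous Makar-Limanov invariant: intersection of kernels of all
`M`-homogeneous LNDs. -/
def MLh (K : Type) [Field K] (n : ℕ) (P : AddSubmonoid (Fin n → ℤ)) :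
    Set (monAlg K n P) :=
  {f | ∀ δ : Derivation K (monAlg K n P) (monAlg K n P),
    IsLND δ → (∃ e : Fin n → ℤ, IsHomog K n P δ e) → δ f = 0}

/-- The Makar-Limanov--Freudenburg invariant: intersection of kernels of all
LNDs admitting a slice. -/
def MLstar (K : Type) [Field K] (n : ℕ) (P : AddSubmonoid (Fin n → ℤ)) :
    Set (monAlg K n P) :=
  {f | ∀ δ : Derivation K (monAlg K n P) (monAlg K n P), IsLND δ → HasSlice δ → δ f = 0}

/-- Intersection of kernels of all homogeneous LNDs admitting a slice. -/
def MLstarh (K : Type) [Field K] (n : ℕ) (P : AddSubmonoid (Fin n → ℤ)) :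
    Set (monAlg K n P) :=
  {f | ∀ δ : Derivation K (monAlg K n P) (monAlg K n P),
    IsLND δ → HasSlice δ → (∃ e : Fin n → ℤ, IsHomog K n P δ e) → δ f = 0}

/-! ### Cones -/

/-- Embedding `ℤⁿ → ℚⁿ`. -/
def toQ (n : ℕ) (m : Fin n → ℤ) : Fin n → ℚ := fun i => (m i : ℚ)

lemma toQ_add (n : ℕ) (a b : Fin n → ℤ) : toQ n (a + b) = toQ n a + toQ n b := by
  funext i; simp [toQ]

lemma toQ_nsmul (n : ℕ) (k : ℕ) (a : Fin n → ℤ) : toQ n (k • a) = (k : ℚ) • toQ n a := by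
  funext i; simp [toQ]

lemma toQ_inj {n : ℕ} {a b : Fin n → ℤ} (h : toQ n a = toQ n b) : a = b := by
  funext i
  have := congrFun h i
  simp only [toQ] at this
  exact_mod_cast this

/-- The natural pairing between `ℚⁿ` and its dual. -/
def pairQ (n : ℕ) (w v : Fin n → ℚ) : ℚ := ∑ i, w i * v i

/-- The natural pairing between `M = ℤⁿ` and `N = ℤⁿ`. -/
def pairZ (n : ℕ) (w v : Fin n → ℤ) : ℤ := ∑ i, w i * v i

/-- The cone `σ∨ = ℚ_{≥0}·P ⊆ ℚⁿ` generated by `P`. -/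
def coneOf (n : ℕ) (P : AddSubmonoid (Fin n → ℤ)) : Set (Fin n → ℚ) :=
  {x | ∃ c : ℚ, 0 ≤ c ∧ ∃ p ∈ P, x = c • toQ n p}

/-- The dual cone of a subset of `ℚⁿ`. -/
def dualCone (n : ℕ) (s : Set (Fin n → ℚ)) : Set (Fin n → ℚ) :=
  {v | ∀ w ∈ s, 0 ≤ pairQ n w v}

/-- The cone `σ ⊆ ℚⁿ` dual to `σ∨`. -/
def sigma (n : ℕ) (P : AddSubmonoid (Fin n → ℤ)) : Set (Fin n → ℚ) :=
  dualCone n (coneOf n P)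

/-- The ray `ℚ_{≥0}·v`. -/
def rayOf (n : ℕ) (v : Fin n → ℚ) : Set (Fin n → ℚ) :=
  {x | ∃ c : ℚ, 0 ≤ c ∧ x = c • v}

/-- A cone is pointed if it contains no line. -/
def IsPointed (n : ℕ) (s : Set (Fin n → ℚ)) : Prop :=
  ∀ x ∈ s, -x ∈ s → x = 0

/-- `v` generates an extremal ray of the cone `s`. -/
def IsExtremalGen (n : ℕ) (s : Set (Fin n → ℚ)) (v : Fin n → ℚ) : Prop :=
  v ≠ 0 ∧ v ∈ s ∧ ∀ x ∈ s, ∀ y ∈ s, x + y ∈ rayOf n v → x ∈ rayOf n v ∧ y ∈ rayOf n v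

/-- A primitive lattice vector: the gcd of its coordinates is `1`. -/
def IsPrimitive (n : ℕ) (u : Fin n → ℤ) : Prop :=
  Finset.univ.gcd u = 1

/-- `u` is the primitive lattice generator of an extremal ray of `σ`. -/
def IsExtGenOfSigma (n : ℕ) (P : AddSubmonoid (Fin n → ℤ)) (u : Fin n → ℤ) : Prop :=
  IsPrimitive n u ∧ IsExtremalGen n (sigma n P) (toQ n u)

/-- `e` is a Demazure root associated to the extremal ray of `σ` with primitive
generator `u`. -/
def IsDemazureRoot (n : ℕ) (P : AddSubmonoid (Fin n → ℤ)) (u e : Fin n → ℤ) : Prop :=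
  IsExtGenOfSigma n P u ∧ pairZ n e u = -1 ∧
    ∀ u' : Fin n → ℤ, IsExtGenOfSigma n P u' → u' ≠ u → 0 ≤ pairZ n e u'

lemma mem_coneOf_int (n : ℕ) (P : AddSubmonoid (Fin n → ℤ)) (m : Fin n → ℤ) :
    toQ n m ∈ coneOf n P ↔ ∃ k : ℕ, 0 < k ∧ k • m ∈ P := by
  constructor
  · rintro ⟨c, hc, p, hp, heq⟩
    refine ⟨c.den, c.pos, ?_⟩
    have hnum : (0:ℤ) ≤ c.num := Rat.num_nonneg.mpr hc
    have key : c.den • m = c.num.toNat • p := by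
      apply toQ_inj
      rw [toQ_nsmul, toQ_nsmul, heq, smul_smul]
      congr 1
      have hden : (c.den : ℚ) ≠ 0 := Nat.cast_ne_zero.mpr c.den_nz
      have h2 : (c.num : ℚ) = c * c.den := (div_eq_iff hden).mp (Rat.num_div_den c)
      have h1 : ((c.num.toNat : ℕ) : ℚ) = (c.num : ℚ) := by
        exact_mod_cast Int.toNat_of_nonneg hnum
      rw [h1, h2]
      ring
    rw [key]
    exact AddSubmonoid.nsmul_mem P hp _
  · rintro ⟨k, hk, hkm⟩
    refine ⟨(k : ℚ)⁻¹, by positivity, k • m, hkm, ?_⟩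
    rw [toQ_nsmul, smul_smul]
    rw [inv_mul_cancel₀ (by exact_mod_cast hk.ne')]
    rw [one_smul]

/-- The saturation `P_sat = σ∨ ∩ M` of `P`. -/
def Psat (n : ℕ) (P : AddSubmonoid (Fin n → ℤ)) : AddSubmonoid (Fin n → ℤ) where
  carrier := {m | toQ n m ∈ coneOf n P}
  zero_mem' := by
    refine ⟨0, le_refl 0, 0, P.zero_mem, ?_⟩
    funext i; simp [toQ]
  add_mem' := by
    intro a b ha hb
    rw [Set.mem_setOf_eq, mem_coneOf_int] at ha hb ⊢
    obtain ⟨k, hk, hka⟩ := ha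
    obtain ⟨l, hl, hlb⟩ := hb
    refine ⟨k * l, Nat.mul_pos hk hl, ?_⟩
    have : (k * l) • (a + b) = l • (k • a) + k • (l • b) := by
      rw [smul_add, smul_smul, smul_smul, mul_comm l k]
    rw [this]
    exact P.add_mem (AddSubmonoid.nsmul_mem P hka l) (AddSubmonoid.nsmul_mem P hlb k)

lemma le_Psat (n : ℕ) (P : AddSubmonoid (Fin n → ℤ)) : P ≤ Psat n P := by
  intro m hm
  exact ⟨1, zero_le_one, m, hm, (one_smul _ _).symm⟩

lemma monAlg_mono (K : Type) [Field K] (n : ℕ) {P Q : AddSubmonoid (Fin n → ℤ)}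
    (h : P ≤ Q) : monAlg K n P ≤ monAlg K n Q :=
  fun _ hf m hm => h (hf m hm)

/-- `p` is a saturation point of `P`: `(p + σ∨) ∩ M ⊆ P`. -/
def IsSatPoint (n : ℕ) (P : AddSubmonoid (Fin n → ℤ)) (p : Fin n → ℤ) : Prop :=
  p ∈ P ∧ ∀ q ∈ Psat n P, p + q ∈ P

/-- The facet of `σ∨` corresponding to the extremal ray of `σ` with primitive
generator `u`: `σ∨ ∩ u^⊥`. -/
def facet (n : ℕ) (P : AddSubmonoid (Fin n → ℤ)) (u : Fin n → ℤ) : Set (Fin n → ℚ) :=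
  {x | x ∈ coneOf n P ∧ pairQ n x (toQ n u) = 0}

/-- The intersection of all facets of `σ∨` other than the one corresponding to `u`. -/
def facetInter (n : ℕ) (P : AddSubmonoid (Fin n → ℤ)) (u : Fin n → ℤ) :
    Set (Fin n → ℚ) :=
  ⋂ u' ∈ {u' : Fin n → ℤ | IsExtGenOfSigma n P u' ∧ u' ≠ u}, facet n P u'

/-- The facet of `σ∨` corresponding to `u` is affine: it is saturated
(`F ∩ M ⊆ P`) and the intersection of all other facets is one-dimensional. -/
def IsAffineFacet (n : ℕ) (P : AddSubmonoid (Fin n → ℤ)) (u : Fin n → ℤ) : Prop :=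
  IsExtGenOfSigma n P u ∧
  (∀ m : Fin n → ℤ, toQ n m ∈ facet n P u → m ∈ P) ∧
  (∃ v : Fin n → ℚ, v ≠ 0 ∧ facetInter n P u = rayOf n v)

/-- The extremal ray of `σ∨` with primitive vector `r`, corresponding to the
affine facet of `u`, is affine. -/
def IsAffineRay (n : ℕ) (P : AddSubmonoid (Fin n → ℤ)) (u r : Fin n → ℤ) : Prop :=
  IsPrimitive n r ∧ IsExtremalGen n (coneOf n P) (toQ n r) ∧
  toQ n r ∉ facet n P u ∧
  r ∈ P ∧ pairZ n r u = 1 ∧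
  ∀ h : Fin n → ℤ, toQ n h ∈ facet n P u → h ∉ P →
    ∀ k : ℕ, 0 < k → h + k • r ∉ P

/-- `r` is the primitive vector of an affine ray of `σ∨`. -/
def IsAffineRayAbs (n : ℕ) (P : AddSubmonoid (Fin n → ℤ)) (r : Fin n → ℤ) : Prop :=
  ∃ u : Fin n → ℤ, IsAffineFacet n P u ∧ IsAffineRay n P u r

/-- The intersection `τ₀` of all affine facets of `σ∨`. -/
def affInter (n : ℕ) (P : AddSubmonoid (Fin n → ℤ)) : Set (Fin n → ℚ) :=
  ⋂ u ∈ {u : Fin n → ℤ | IsAffineFacet n P u}, facet n P u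

lemma pairQ_add_left (n : ℕ) (x y v : Fin n → ℚ) :
    pairQ n (x + y) v = pairQ n x v + pairQ n y v := by
  simp [pairQ, add_mul, Finset.sum_add_distrib]

/-- `ML*_h(K[P])` as a subalgebra of `K[P]`. -/
def MLstarhAlg (K : Type) [Field K] (n : ℕ) (P : AddSubmonoid (Fin n → ℤ)) :
    Subalgebra K (monAlg K n P) where
  carrier := MLstarh K n P
  mul_mem' := by
    intro a b ha hb δ h1 h2 h3
    rw [Derivation.leibniz, ha δ h1 h2 h3, hb δ h1 h2 h3, smul_zero, smul_zero, add_zero]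
  add_mem' := by
    intro a b ha hb δ h1 h2 h3
    rw [map_add, ha δ h1 h2 h3, hb δ h1 h2 h3, add_zero]
  algebraMap_mem' := by
    intro c δ _ _ _
    exact Derivation.map_algebraMap δ c

/-- The submonoid `P ∩ τ₀`, where `τ₀` is the intersection of all affine facets. -/
def PtauZero (n : ℕ) (P : AddSubmonoid (Fin n → ℤ)) : AddSubmonoid (Fin n → ℤ) where
  carrier := {m | m ∈ P ∧ toQ n m ∈ affInter n P}
  zero_mem' := by
    refine ⟨P.zero_mem, ?_⟩
    simp only [affInter, Set.mem_iInter]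
    intro u hu
    refine ⟨⟨0, le_refl 0, 0, P.zero_mem, ?_⟩, ?_⟩
    · funext i; simp [toQ]
    · simp [pairQ, toQ]
  add_mem' := by
    rintro a b ⟨haP, ha⟩ ⟨hbP, hb⟩
    refine ⟨P.add_mem haP hbP, ?_⟩
    simp only [affInter, Set.mem_iInter] at ha hb ⊢
    intro u hu
    obtain ⟨-, ha2⟩ := ha u hu
    obtain ⟨-, hb2⟩ := hb u hu
    refine ⟨⟨1, zero_le_one, a + b, P.add_mem haP hbP, (one_smul _ _).symm⟩, ?_⟩
    rw [toQ_add, pairQ_add_left, ha2, hb2, add_zero]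

/-! ### Auxiliary development -/

section Aux

variable {n : ℕ}

lemma pairQ_comm (x y : Fin n → ℚ) : pairQ n x y = pairQ n y x := by
  simp [pairQ, mul_comm]

lemma pairQ_smul_left (c : ℚ) (x y : Fin n → ℚ) :
    pairQ n (c • x) y = c * pairQ n x y := by
  simp [pairQ, Finset.mul_sum, mul_assoc]

lemma pairQ_neg_left (x y : Fin n → ℚ) : pairQ n (-x) y = -pairQ n x y := by
  simp [pairQ, Finset.sum_neg_distrib]

lemma pairQ_sub_left (x x' y : Fin n → ℚ) :
    pairQ n (x - x') y = pairQ n x y - pairQ n x' y := by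
  simp [pairQ, sub_mul, Finset.sum_sub_distrib]

lemma pairQ_zero_left (y : Fin n → ℚ) : pairQ n 0 y = 0 := by simp [pairQ]

lemma pairQ_add_right (x y z : Fin n → ℚ) :
    pairQ n x (y + z) = pairQ n x y + pairQ n x z := by
  rw [pairQ_comm, pairQ_add_left, pairQ_comm y x, pairQ_comm z x]

lemma pairQ_smul_right (c : ℚ) (x y : Fin n → ℚ) :
    pairQ n x (c • y) = c * pairQ n x y := by
  rw [pairQ_comm, pairQ_smul_left, pairQ_comm]

lemma pairQ_sub_right (x y z : Fin n → ℚ) :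
    pairQ n x (y - z) = pairQ n x y - pairQ n x z := by
  rw [pairQ_comm, pairQ_sub_left, pairQ_comm y x, pairQ_comm z x]

lemma pairQ_sum_left {ι : Type*} (t : Finset ι) (f : ι → Fin n → ℚ) (y : Fin n → ℚ) :
    pairQ n (∑ i ∈ t, f i) y = ∑ i ∈ t, pairQ n (f i) y := by
  classical
  induction t using Finset.induction with
  | empty => simp [pairQ]
  | insert a t' h ih => rw [Finset.sum_insert h, pairQ_add_left, ih,
      Finset.sum_insert h]

lemma pairQ_self_pos {x : Fin n → ℚ} (hx : x ≠ 0) : 0 < pairQ n x x := by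
  have h1 : 0 ≤ pairQ n x x := Finset.sum_nonneg fun i _ => mul_self_nonneg _
  rcases h1.lt_or_eq with h | h
  · exact h
  · exfalso; apply hx
    funext i
    have := (Finset.sum_eq_zero_iff_of_nonneg
      (fun i _ => mul_self_nonneg (x i))).mp h.symm i (Finset.mem_univ i)
    have := mul_self_eq_zero.mp this
    simpa using this

lemma pairQ_toQ (a b : Fin n → ℤ) :
    pairQ n (toQ n a) (toQ n b) = (pairZ n a b : ℚ) := by
  simp [pairQ, pairZ, toQ]

lemma toQ_eq_zero_iff {a : Fin n → ℤ} : toQ n a = 0 ↔ a = 0 := by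
  constructor
  · intro h; funext i
    have := congrFun h i
    simp only [toQ, Pi.zero_apply] at this ⊢
    exact_mod_cast this
  · rintro rfl; funext i; simp [toQ]

lemma toQ_mem_coneOf {P : AddSubmonoid (Fin n → ℤ)} {p : Fin n → ℤ} (hp : p ∈ P) :
    toQ n p ∈ coneOf n P :=
  ⟨1, zero_le_one, p, hp, (one_smul _ _).symm⟩

lemma smul_mem_coneOf {P : AddSubmonoid (Fin n → ℤ)} {x : Fin n → ℚ} {c : ℚ}
    (hc : 0 ≤ c) (hx : x ∈ coneOf n P) : c • x ∈ coneOf n P := by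
  obtain ⟨d, hd, p, hp, rfl⟩ := hx
  exact ⟨c * d, mul_nonneg hc hd, p, hp, (smul_smul c d _)⟩

lemma add_mem_coneOf {P : AddSubmonoid (Fin n → ℤ)} {x y : Fin n → ℚ}
    (hx : x ∈ coneOf n P) (hy : y ∈ coneOf n P) : x + y ∈ coneOf n P := by
  obtain ⟨c, hc, p, hp, rfl⟩ := hx
  obtain ⟨d, hd, q, hq, rfl⟩ := hy
  set N : ℕ := c.den * d.den with hN
  have hNpos : (0:ℚ) < (N : ℚ) := by
    have := c.pos; have := d.pos
    exact_mod_cast Nat.mul_pos c.pos d.pos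
  set a : ℤ := c.num * d.den with ha
  set b : ℤ := d.num * c.den with hb
  have hann : 0 ≤ a := mul_nonneg (Rat.num_nonneg.mpr hc) (by positivity)
  have hbnn : 0 ≤ b := mul_nonneg (Rat.num_nonneg.mpr hd) (by positivity)
  have hcden : ((c.den : ℚ)) ≠ 0 := by exact_mod_cast c.den_nz
  have hdden : ((d.den : ℚ)) ≠ 0 := by exact_mod_cast d.den_nz
  have hc' : (c.num : ℚ) = c * c.den := (div_eq_iff hcden).mp (Rat.num_div_den c)
  have hd' : (d.num : ℚ) = d * d.den := (div_eq_iff hdden).mp (Rat.num_div_den d)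
  have haq : (a : ℚ) = c * N := by rw [ha, hN]; push_cast; rw [hc']; ring
  have hbq : (b : ℚ) = d * N := by rw [hb, hN]; push_cast; rw [hd']; ring
  refine ⟨(N : ℚ)⁻¹, by positivity, a.toNat • p + b.toNat • q,
    P.add_mem (P.nsmul_mem hp _) (P.nsmul_mem hq _), ?_⟩
  rw [toQ_add, toQ_nsmul, toQ_nsmul, smul_add, smul_smul, smul_smul]
  have h1 : ((a.toNat : ℕ) : ℚ) = (a : ℚ) := by exact_mod_cast Int.toNat_of_nonneg hann
  have h2 : ((b.toNat : ℕ) : ℚ) = (b : ℚ) := by exact_mod_cast Int.toNat_of_nonneg hbnn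
  rw [h1, h2, haq, hbq]
  congr 1 <;> rw [mul_comm _ ((_ : ℚ) * _), mul_assoc, mul_inv_cancel₀ hNpos.ne', mul_one]

lemma zero_mem_coneOf {P : AddSubmonoid (Fin n → ℤ)} : (0 : Fin n → ℚ) ∈ coneOf n P := by
  have := toQ_mem_coneOf (P := P) P.zero_mem
  rwa [toQ_eq_zero_iff.mpr rfl] at this

end Aux

section Aux2

variable {n : ℕ}

lemma mem_rayOf_self (v : Fin n → ℚ) : v ∈ rayOf n v := ⟨1, zero_le_one, (one_smul _ _).symm⟩

lemma rayOf_smul {v : Fin n → ℚ} {a : ℚ} (ha : 0 < a) : rayOf n (a • v) = rayOf n v := by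
  ext x
  constructor
  · rintro ⟨c, hc, rfl⟩
    exact ⟨c * a, mul_nonneg hc ha.le, (smul_smul c a v)⟩
  · rintro ⟨c, hc, rfl⟩
    exact ⟨c / a, div_nonneg hc ha.le, by rw [smul_smul, div_mul_cancel₀ _ ha.ne']⟩

lemma neg_not_mem_rayOf {v : Fin n → ℚ} (hv : v ≠ 0) : -v ∉ rayOf n v := by
  rintro ⟨c, hc, h⟩
  have : (c + 1) • v = 0 := by rw [add_smul, one_smul, ← h, neg_add_cancel]
  have hc1 : c + 1 ≠ 0 := by positivity
  exact hv (by simpa [hc1] using this)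

lemma smul_mem_sigma {P : AddSubmonoid (Fin n → ℤ)} {w : Fin n → ℚ} {a : ℚ}
    (ha : 0 ≤ a) (hw : w ∈ sigma n P) : a • w ∈ sigma n P := by
  intro x hx
  rw [pairQ_smul_right]
  exact mul_nonneg ha (hw x hx)

lemma isExtremalGen_smul {s : Set (Fin n → ℚ)} {v : Fin n → ℚ} {a : ℚ}
    (ha : 0 < a) (hsmul : a • v ∈ s) (hv : IsExtremalGen n s v) :
    IsExtremalGen n s (a • v) := by
  obtain ⟨h0, hmem, hext⟩ := hv
  refine ⟨fun h => h0 ?_, hsmul, ?_⟩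
  · have := congrArg (fun x => a⁻¹ • x) h
    simpa [smul_smul, inv_mul_cancel₀ ha.ne'] using this
  · intro x hx y hy hxy
    rw [rayOf_smul ha] at hxy ⊢
    exact hext x hx y hy hxy

/-- Scale a nonzero rational vector to a primitive integral vector. -/
lemma exists_primitive {w : Fin n → ℚ} (hw : w ≠ 0) :
    ∃ (u : Fin n → ℤ) (a : ℚ), 0 < a ∧ toQ n u = a • w ∧ IsPrimitive n u := by
  classical
  set N : ℕ := ∏ i, (w i).den with hN
  have hNpos : 0 < N := Finset.prod_pos fun i _ => (w i).pos
  set z : Fin n → ℤ := fun i => (w i).num * ((N / (w i).den : ℕ) : ℤ) with hz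
  have hzQ : toQ n z = (N : ℚ) • w := by
    funext i
    have hdvd : (w i).den ∣ N := Finset.dvd_prod_of_mem _ (Finset.mem_univ i)
    have : ((w i).den : ℚ) * ((N / (w i).den : ℕ) : ℚ) = (N : ℚ) := by
      rw [← Nat.cast_mul, Nat.mul_div_cancel' hdvd]
    have hnum : ((w i).num : ℚ) = w i * (w i).den :=
      (div_eq_iff (by exact_mod_cast (w i).den_nz)).mp (Rat.num_div_den (w i))
    simp only [toQ, hz, Pi.smul_apply, smul_eq_mul]
    rw [Int.cast_mul, Int.cast_natCast, hnum, mul_assoc, this]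
    ring
  have hzne : z ≠ 0 := by
    intro h
    apply hw
    have : toQ n z = 0 := by rw [h]; exact toQ_eq_zero_iff.mpr rfl
    rw [hzQ] at this
    have hN' : ((N:ℚ)) ≠ 0 := by exact_mod_cast hNpos.ne'
    simpa [hN'] using this
  set g : ℤ := Finset.univ.gcd z with hg
  have hgdvd : ∀ i, g ∣ z i := fun i => Finset.gcd_dvd (Finset.mem_univ i)
  have hgne : g ≠ 0 := by
    intro h
    apply hzne
    funext i
    simpa [h] using hgdvd i
  have hgnonneg : 0 ≤ g := Int.nonneg_of_normalize_eq_self (Finset.normalize_gcd)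
  have hgpos : 0 < g := lt_of_le_of_ne hgnonneg (Ne.symm hgne)
  set u : Fin n → ℤ := fun i => z i / g with hu
  have hzu : ∀ i, z i = g * u i := fun i => (Int.mul_ediv_cancel' (hgdvd i)).symm
  have hprim : IsPrimitive n u := by
    have : Finset.univ.gcd z = normalize g * Finset.univ.gcd u := by
      rw [show z = fun i => g * u i from funext hzu]
      exact Finset.gcd_mul_left
    rw [← hg, Int.normalize_of_nonneg hgnonneg] at this
    have h1 : g * Finset.univ.gcd u = g * 1 := by rw [mul_one, ← this]
    exact mul_left_cancel₀ hgne h1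
  refine ⟨u, (N : ℚ) / (g : ℚ), by positivity, ?_, hprim⟩
  funext i
  have h1 : (z i : ℚ) = (g : ℚ) * (u i : ℚ) := by exact_mod_cast hzu i
  have h2 := congrFun hzQ i
  simp only [toQ, Pi.smul_apply, smul_eq_mul] at h2 ⊢
  have hgQ : ((g : ℚ)) ≠ 0 := by exact_mod_cast hgne
  rw [div_mul_eq_mul_div, eq_div_iff hgQ]
  linear_combination h2 - h1

end Aux2

section Aux3

variable {n : ℕ}

/-- Two primitive integral vectors that are positively proportional are equal. -/
lemma primitive_eq_of_proportional {r r' : Fin n → ℤ} (hr : IsPrimitive n r)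
    (hr' : IsPrimitive n r') {q : ℚ} (hq : 0 < q) (h : toQ n r' = q • toQ n r) :
    r' = r := by
  have hden : ((q.den : ℚ)) ≠ 0 := by exact_mod_cast q.den_nz
  have hq' : (q.num : ℚ) = q * q.den := (div_eq_iff hden).mp (Rat.num_div_den q)
  have key : ∀ i, (q.den : ℤ) * r' i = q.num * r i := by
    intro i
    have h1 := congrFun h i
    simp only [toQ, Pi.smul_apply, smul_eq_mul] at h1
    have : ((q.den : ℤ) : ℚ) * (r' i : ℚ) = ((q.num : ℤ) : ℚ) * (r i : ℚ) := by
      rw [h1]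
      push_cast
      rw [hq']
      ring
    exact_mod_cast this
  have hnum_pos : 0 < q.num := Rat.num_pos.mpr hq
  have h2 : Finset.univ.gcd (fun i => (q.den : ℤ) * r' i) =
      Finset.univ.gcd (fun i => q.num * r i) := by
    congr 1
    exact funext key
  rw [Finset.gcd_mul_left, Finset.gcd_mul_left, hr, hr'] at h2
  have h3 : (q.den : ℤ) = q.num := by
    have hd : normalize ((q.den : ℤ)) = (q.den : ℤ) :=
      Int.normalize_of_nonneg (by positivity)
    have hn : normalize (q.num) = q.num := Int.normalize_of_nonneg hnum_pos.le
    rw [hd, hn, mul_one, mul_one] at h2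
    exact h2
  have hq1 : q = 1 := by
    have : (q.num : ℚ) = q.den := by exact_mod_cast h3.symm
    rw [hq'] at this
    have h4 : q * (q.den : ℚ) = 1 * (q.den : ℚ) := by rw [one_mul]; exact this
    exact mul_right_cancel₀ hden h4
  rw [hq1, one_smul] at h
  exact toQ_inj h

end Aux3

section Aux4

variable {n : ℕ} {P : AddSubmonoid (Fin n → ℤ)}

lemma pair_nonneg_of_mem_P {w : Fin n → ℚ} {S : Finset (Fin n → ℤ)}
    (hS : AddSubmonoid.closure (S : Set (Fin n → ℤ)) = P)
    (hw : ∀ p ∈ S, 0 ≤ pairQ n (toQ n p) w) :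
    ∀ p ∈ P, 0 ≤ pairQ n (toQ n p) w := by
  intro p hp
  rw [← hS] at hp
  induction hp using AddSubmonoid.closure_induction with
  | mem x hx => exact hw x hx
  | zero =>
    have : toQ n (0 : Fin n → ℤ) = 0 := toQ_eq_zero_iff.mpr rfl
    rw [this, pairQ_zero_left]
  | add x y hx hy ihx ihy =>
    rw [toQ_add, pairQ_add_left]
    positivity

lemma mem_sigma_iff {w : Fin n → ℚ} {S : Finset (Fin n → ℤ)}
    (hS : AddSubmonoid.closure (S : Set (Fin n → ℤ)) = P) :
    w ∈ sigma n P ↔ ∀ p ∈ S, 0 ≤ pairQ n (toQ n p) w := by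
  constructor
  · intro hw p hp
    apply hw
    apply toQ_mem_coneOf
    rw [← hS]
    exact AddSubmonoid.subset_closure hp
  · intro hw x hx
    obtain ⟨c, hc, p, hp, rfl⟩ := hx
    rw [pairQ_smul_left]
    exact mul_nonneg hc (pair_nonneg_of_mem_P hS hw p hp)

lemma pair_mem_P_nonneg {w : Fin n → ℚ} (hw : w ∈ sigma n P) {p : Fin n → ℤ}
    (hp : p ∈ P) : 0 ≤ pairQ n (toQ n p) w :=
  hw _ (toQ_mem_coneOf hp)

/-- `σ` is pointed when `P` generates `M` as a group. -/
lemma sigma_pointed (hgen : AddSubgroup.closure (P : Set (Fin n → ℤ)) = ⊤)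
    {w : Fin n → ℚ} (hw : w ∈ sigma n P) (hw' : -w ∈ sigma n P) : w = 0 := by
  have h0 : ∀ p ∈ P, pairQ n (toQ n p) w = 0 := by
    intro p hp
    have h1 := pair_mem_P_nonneg hw hp
    have h2 := pair_mem_P_nonneg hw' hp
    rw [pairQ_comm, pairQ_neg_left, pairQ_comm] at h2
    linarith
  have hall : ∀ m : Fin n → ℤ, pairQ n (toQ n m) w = 0 := by
    intro m
    have hm : m ∈ AddSubgroup.closure (P : Set (Fin n → ℤ)) := by
      rw [hgen]; trivial
    induction hm using AddSubgroup.closure_induction with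
    | mem x hx => exact h0 x hx
    | zero =>
      have : toQ n (0 : Fin n → ℤ) = 0 := toQ_eq_zero_iff.mpr rfl
      rw [this, pairQ_zero_left]
    | add x y hx hy ihx ihy => rw [toQ_add, pairQ_add_left, ihx, ihy, add_zero]
    | neg x hx ihx =>
      have : toQ n (-x) = -(toQ n x) := by funext i; simp [toQ]
      rw [this, pairQ_neg_left, ihx, neg_zero]
  funext j
  have := hall (Pi.single j 1)
  have hsingle : pairQ n (toQ n (Pi.single j 1)) w = w j := by
    rw [pairQ]
    rw [Finset.sum_eq_single j]
    · simp [toQ]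
    · intro i _ hij
      simp [toQ, Pi.single_apply, hij]
    · intro h; exact absurd (Finset.mem_univ j) h
  rw [hsingle] at this
  simpa using this

end Aux4

section Farkas

variable {n : ℕ}

/-- Farkas' lemma: a vector not in the cone generated by finitely many vectors
can be separated from it by a linear functional. -/
lemma farkas : ∀ (k : ℕ) (a : Fin k → (Fin n → ℚ)) (b : Fin n → ℚ),
    (¬ ∃ c : Fin k → ℚ, (∀ i, 0 ≤ c i) ∧ b = ∑ i, c i • a i) →
    ∃ w : Fin n → ℚ, (∀ i, 0 ≤ pairQ n (a i) w) ∧ pairQ n b w < 0 := by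
  intro k
  induction k with
  | zero =>
    intro a b hnc
    have hb : b ≠ 0 := by
      rintro rfl
      exact hnc ⟨Fin.elim0, fun i => i.elim0, by simp⟩
    refine ⟨-b, fun i => i.elim0, ?_⟩
    rw [pairQ_comm, pairQ_neg_left, pairQ_comm]
    simpa using pairQ_self_pos hb
  | succ k ih =>
    intro a b hnc
    set A : Fin k → (Fin n → ℚ) := fun j => a j.castSucc with hA
    set aL : Fin n → ℚ := a (Fin.last k) with haL
    have hncA : ¬ ∃ c : Fin k → ℚ, (∀ i, 0 ≤ c i) ∧ b = ∑ i, c i • A i := by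
      rintro ⟨c, hc, hb⟩
      apply hnc
      refine ⟨Fin.snoc c 0, ?_, ?_⟩
      · intro i
        induction i using Fin.lastCases with
        | last => simp
        | cast j => simpa using hc j
      · rw [Fin.sum_univ_castSucc]
        simp only [Fin.snoc_castSucc, Fin.snoc_last, zero_smul, add_zero]
        exact hb
    obtain ⟨w, hw, hbw⟩ := ih A b hncA
    by_cases hL : 0 ≤ pairQ n aL w
    · refine ⟨w, ?_, hbw⟩
      intro i
      induction i using Fin.lastCases with
      | last => exact hL
      | cast j => exact hw j
    · push_neg at hL
      have hLne : pairQ n aL w ≠ 0 := hL.ne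
      set α := pairQ n aL w with hα
      set A' : Fin k → (Fin n → ℚ) :=
        fun j => A j - (pairQ n (A j) w / α) • aL with hA'
      set B' : Fin n → ℚ := b - (pairQ n b w / α) • aL with hB'
      have hncA' : ¬ ∃ c : Fin k → ℚ, (∀ i, 0 ≤ c i) ∧ B' = ∑ i, c i • A' i := by
        rintro ⟨c, hc, hBc⟩
        apply hnc
        set μ : ℚ := pairQ n b w / α - ∑ j, c j * (pairQ n (A j) w / α) with hμ
        have hsum : ∀ j, c j • A' j = c j • A j - (c j * (pairQ n (A j) w / α)) • aL := by
          intro j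
          rw [hA', smul_sub, smul_smul]
        have hBexp : b = ∑ j, c j • A j + μ • aL := by
          have h1 : B' = ∑ j, c j • A j - (∑ j, c j * (pairQ n (A j) w / α)) • aL := by
            rw [hBc, Finset.sum_congr rfl (fun j _ => hsum j), Finset.sum_sub_distrib,
              Finset.sum_smul]
          rw [hB'] at h1
          have h2 := sub_eq_iff_eq_add.mp h1
          rw [h2, hμ, sub_smul]
          abel
        have hμnn : 0 ≤ μ := by
          have hsumnn : 0 ≤ ∑ j, c j * pairQ n (A j) w :=
            Finset.sum_nonneg fun j _ => mul_nonneg (hc j) (hw j)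
          have : μ = (pairQ n b w - ∑ j, c j * pairQ n (A j) w) / α := by
            rw [hμ, sub_div, Finset.sum_div]
            congr 1
            refine Finset.sum_congr rfl fun j _ => ?_
            ring
          rw [this]
          exact div_nonneg_iff.mpr (Or.inr ⟨by linarith, hL.le⟩)
        refine ⟨Fin.snoc c μ, ?_, ?_⟩
        · intro i
          induction i using Fin.lastCases with
          | last => simpa using hμnn
          | cast j => simpa using hc j
        · rw [Fin.sum_univ_castSucc]
          simp only [Fin.snoc_castSucc, Fin.snoc_last]
          exact hBexp
      obtain ⟨w', hw', hBw'⟩ := ih A' B' hncA'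
      refine ⟨w' - (pairQ n aL w' / α) • w, ?_, ?_⟩
      · intro i
        induction i using Fin.lastCases with
        | last =>
          rw [pairQ_sub_right, pairQ_smul_right, ← haL, ← hα]
          rw [div_mul_cancel₀ _ hLne]
          simp
        | cast j =>
          have h1 := hw' j
          rw [hA', pairQ_sub_left, pairQ_smul_left] at h1
          rw [pairQ_sub_right, pairQ_smul_right]
          have heq : pairQ n (A j) w' - pairQ n aL w' / α * pairQ n (A j) w =
              pairQ n (A j) w' - pairQ n (A j) w / α * pairQ n aL w' := by ring
          rw [heq]
          exact h1
      · rw [pairQ_sub_right, pairQ_smul_right]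
        rw [hB', pairQ_sub_left, pairQ_smul_left] at hBw'
        have heq : pairQ n b w' - pairQ n aL w' / α * pairQ n b w =
            pairQ n b w' - pairQ n b w / α * pairQ n aL w' := by ring
        rw [heq]
        exact hBw'

end Farkas

section Mink

variable {n : ℕ} {P : AddSubmonoid (Fin n → ℤ)}

lemma pairQ_zero_right (x : Fin n → ℚ) : pairQ n x 0 = 0 := by
  rw [pairQ_comm]; exact pairQ_zero_left x

lemma pairQ_neg_right (x y : Fin n → ℚ) : pairQ n x (-y) = -pairQ n x y := by
  rw [pairQ_comm, pairQ_neg_left, pairQ_comm]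

/-- The linear subspace of directions tangent to all constraints tight at `w`. -/
def tightSpace (n : ℕ) (S : Finset (Fin n → ℤ)) (w : Fin n → ℚ) :
    Submodule ℚ (Fin n → ℚ) where
  carrier := {x | ∀ p ∈ S, pairQ n (toQ n p) w = 0 → pairQ n (toQ n p) x = 0}
  zero_mem' := fun p _ _ => pairQ_zero_right _
  add_mem' := by
    intro a b ha hb p hp hpw
    rw [pairQ_add_right, ha p hp hpw, hb p hp hpw, add_zero]
  smul_mem' := by
    intro c a ha p hp hpw
    rw [pairQ_smul_right, ha p hp hpw, mul_zero]

lemma self_mem_tightSpace (S : Finset (Fin n → ℤ)) (w : Fin n → ℚ) :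
    w ∈ tightSpace n S w := fun _ _ h => h

lemma tightSpace_le_of_tight_le {S : Finset (Fin n → ℤ)} {w w' : Fin n → ℚ}
    (h : ∀ p ∈ S, pairQ n (toQ n p) w = 0 → pairQ n (toQ n p) w' = 0) :
    tightSpace n S w' ≤ tightSpace n S w := by
  intro v hv p hp hpw
  exact hv p hp (h p hp hpw)

lemma tightSpace_lt {S : Finset (Fin n → ℤ)} {w w' : Fin n → ℚ}
    (h : ∀ p ∈ S, pairQ n (toQ n p) w = 0 → pairQ n (toQ n p) w' = 0)
    {x : Fin n → ℚ} (hx : x ∈ tightSpace n S w) {p₁ : Fin n → ℤ} (hp₁ : p₁ ∈ S)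
    (h1 : pairQ n (toQ n p₁) w' = 0) (h2 : pairQ n (toQ n p₁) x ≠ 0) :
    tightSpace n S w' < tightSpace n S w := by
  refine lt_of_le_of_ne (tightSpace_le_of_tight_le h) ?_
  intro heq
  rw [← heq] at hx
  exact h2 (hx p₁ hp₁ h1)

lemma finrank_tightSpace_lt {S : Finset (Fin n → ℤ)} {w w' : Fin n → ℚ}
    (h : tightSpace n S w' < tightSpace n S w) :
    Module.finrank ℚ (tightSpace n S w') < Module.finrank ℚ (tightSpace n S w) :=
  Submodule.finrank_lt_finrank_of_lt h

end Mink

section Mink2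

variable {n : ℕ} {P : AddSubmonoid (Fin n → ℤ)}

/-- Minkowski-type theorem: every linear functional that is nonnegative on all
primitive extremal generators of `σ` is nonnegative on all of `σ`. -/
lemma pair_nonneg_on_sigma (hgen : AddSubgroup.closure (P : Set (Fin n → ℤ)) = ⊤)
    {S : Finset (Fin n → ℤ)} (hS : AddSubmonoid.closure (S : Set (Fin n → ℤ)) = P)
    (y : Fin n → ℚ)
    (hy : ∀ u : Fin n → ℤ, IsExtGenOfSigma n P u → 0 ≤ pairQ n y (toQ n u)) :
    ∀ w ∈ sigma n P, 0 ≤ pairQ n y w := by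
  suffices H : ∀ d : ℕ, ∀ w : Fin n → ℚ,
      Module.finrank ℚ (tightSpace n S w) = d →
      (∀ p ∈ S, 0 ≤ pairQ n (toQ n p) w) → 0 ≤ pairQ n y w by
    intro w hw
    exact H _ w rfl (fun p hp => (mem_sigma_iff hS).mp hw p hp)
  intro d
  induction d using Nat.strong_induction_on with
  | _ d IH =>
  intro w hrank hw
  by_cases hw0 : w = 0
  · rw [hw0, pairQ_zero_right]
  -- there is a non-tight constraint
  have exP : ∃ p₀ ∈ S, 0 < pairQ n (toQ n p₀) w := by
    by_contra hc
    push_neg at hc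
    have hall : ∀ p ∈ S, pairQ n (toQ n p) w = 0 :=
      fun p hp => le_antisymm (hc p hp) (hw p hp)
    apply hw0
    apply sigma_pointed hgen ((mem_sigma_iff hS).mpr hw)
    apply (mem_sigma_iff hS).mpr
    intro p hp
    rw [pairQ_comm, pairQ_neg_left, pairQ_comm, hall p hp, neg_zero]
  obtain ⟨p₀, hp₀S, hp₀w⟩ := exP
  by_cases hspan : ∀ x ∈ tightSpace n S w, x ∈ Submodule.span ℚ {w}
  · -- base case : `w` spans an extremal ray of `σ`
    have hwsig : w ∈ sigma n P := (mem_sigma_iff hS).mpr hw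
    have hext : IsExtremalGen n (sigma n P) w := by
      refine ⟨hw0, hwsig, ?_⟩
      have key : ∀ v ∈ sigma n P, ∀ v' ∈ sigma n P, ∀ c : ℚ,
          v + v' = c • w → v ∈ rayOf n w := by
        intro v hv v' hv' c hsum
        have hvT : v ∈ tightSpace n S w := by
          intro p hp hpw
          have h1 : 0 ≤ pairQ n (toQ n p) v := (mem_sigma_iff hS).mp hv p hp
          have h2 : 0 ≤ pairQ n (toQ n p) v' := (mem_sigma_iff hS).mp hv' p hp
          have h3 : pairQ n (toQ n p) v + pairQ n (toQ n p) v' = 0 := by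
            rw [← pairQ_add_right, hsum, pairQ_smul_right, hpw, mul_zero]
          linarith
        obtain ⟨a, ha⟩ := Submodule.mem_span_singleton.mp (hspan v hvT)
        have hanneg : 0 ≤ a := by
          have h1 : 0 ≤ pairQ n (toQ n p₀) v := (mem_sigma_iff hS).mp hv p₀ hp₀S
          rw [← ha, pairQ_smul_right] at h1
          nlinarith
        exact ⟨a, hanneg, ha.symm⟩
      intro v hv v' hv' hsum
      obtain ⟨c, _, hc⟩ := hsum
      constructor
      · exact key v hv v' hv' c hc
      · exact key v' hv' v hv c (by rw [← hc]; abel)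
    obtain ⟨u, a, hapos, htoQ, hprim⟩ := exists_primitive hw0
    have hgen' : IsExtGenOfSigma n P u := by
      refine ⟨hprim, ?_⟩
      rw [htoQ]
      exact isExtremalGen_smul hapos (smul_mem_sigma hapos.le hwsig) hext
    have := hy u hgen'
    rw [htoQ, pairQ_smul_right] at this
    nlinarith
  · -- inductive step
    push_neg at hspan
    obtain ⟨x₀, hx₀T, hx₀span⟩ := hspan
    have hx₀ne : x₀ ≠ 0 := fun h => hx₀span (h ▸ Submodule.zero_mem _)
    have hex : ∃ p ∈ S, pairQ n (toQ n p) x₀ ≠ 0 := by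
      by_contra hc
      push_neg at hc
      apply hx₀ne
      apply sigma_pointed hgen
      · exact (mem_sigma_iff hS).mpr (fun p hp => (hc p hp).ge)
      · apply (mem_sigma_iff hS).mpr
        intro p hp
        rw [pairQ_neg_right, hc p hp, neg_zero]
    obtain ⟨q₀, hq₀S, hq₀⟩ := hex
    obtain ⟨x, hxT, hxspan, q₁, hq₁S, hq₁neg⟩ :
        ∃ x, x ∈ tightSpace n S w ∧ x ∉ Submodule.span ℚ {w} ∧
          ∃ p ∈ S, pairQ n (toQ n p) x < 0 := by
      rcases lt_or_gt_of_ne hq₀ with h | h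
      · exact ⟨x₀, hx₀T, hx₀span, q₀, hq₀S, h⟩
      · refine ⟨-x₀, neg_mem hx₀T, ?_, q₀, hq₀S, ?_⟩
        · intro hc
          exact hx₀span (by simpa using neg_mem hc)
        · rw [pairQ_neg_right]; linarith
    have hxne : x ≠ 0 := fun h => hxspan (h ▸ Submodule.zero_mem _)
    set Sneg : Finset (Fin n → ℤ) :=
      S.filter (fun p => pairQ n (toQ n p) x < 0) with hSneg
    have hSnegne : Sneg.Nonempty := ⟨q₁, Finset.mem_filter.mpr ⟨hq₁S, hq₁neg⟩⟩
    have hposW : ∀ p ∈ Sneg, 0 < pairQ n (toQ n p) w := by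
      intro p hp
      obtain ⟨hpS, hpx⟩ := Finset.mem_filter.mp hp
      rcases (hw p hpS).lt_or_eq with h | h
      · exact h
      · exact absurd (hxT p hpS h.symm) hpx.ne
    set t₁ : ℚ := Sneg.inf' hSnegne
      (fun p => pairQ n (toQ n p) w / (-(pairQ n (toQ n p) x))) with ht₁
    have ht₁pos : 0 < t₁ := by
      rw [ht₁, Finset.lt_inf'_iff]
      intro p hp
      exact div_pos (hposW p hp) (neg_pos.mpr (Finset.mem_filter.mp hp).2)
    set w₁ : Fin n → ℚ := w + t₁ • x with hw₁def
    have hw₁pair : ∀ v : Fin n → ℚ,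
        pairQ n v w₁ = pairQ n v w + t₁ * pairQ n v x := by
      intro v
      rw [hw₁def, pairQ_add_right, pairQ_smul_right]
    have hw₁ : ∀ p ∈ S, 0 ≤ pairQ n (toQ n p) w₁ := by
      intro p hp
      rw [hw₁pair]
      rcases lt_or_ge (pairQ n (toQ n p) x) 0 with hneg | hpos
      · have hmem : p ∈ Sneg := Finset.mem_filter.mpr ⟨hp, hneg⟩
        have hle := Finset.inf'_le
          (fun p => pairQ n (toQ n p) w / (-(pairQ n (toQ n p) x))) hmem
        rw [le_div_iff₀ (by linarith)] at hle
        nlinarith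
      · nlinarith [hw p hp, mul_nonneg ht₁pos.le hpos]
    have htight₁ : ∀ p ∈ S, pairQ n (toQ n p) w = 0 → pairQ n (toQ n p) w₁ = 0 := by
      intro p hp h
      rw [hw₁pair, h, hxT p hp h, mul_zero, add_zero]
    obtain ⟨pm, hpmS, hpmeq⟩ := Finset.exists_mem_eq_inf' hSnegne
      (fun p => pairQ n (toQ n p) w / (-(pairQ n (toQ n p) x)))
    have hpmx : pairQ n (toQ n pm) x < 0 := (Finset.mem_filter.mp hpmS).2
    have hpm0 : pairQ n (toQ n pm) w₁ = 0 := by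
      have hcne : pairQ n (toQ n pm) x ≠ 0 := hpmx.ne
      rw [hw₁pair, ht₁, hpmeq, div_neg, neg_mul, div_mul_cancel₀ _ hcne,
        add_neg_cancel]
    have hltrank : Module.finrank ℚ (tightSpace n S w₁) < d := by
      rw [← hrank]
      exact finrank_tightSpace_lt (tightSpace_lt htight₁ hxT
        (Finset.mem_filter.mp hpmS).1 hpm0 hpmx.ne)
    have hIH₁ : 0 ≤ pairQ n y w₁ :=
      IH _ hltrank w₁ rfl hw₁
    set Spos : Finset (Fin n → ℤ) :=
      S.filter (fun p => 0 < pairQ n (toQ n p) x) with hSpos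
    by_cases hSposne : Spos.Nonempty
    · -- Case A : the line through `w` in direction `x` exits σ on both sides
      have hposW2 : ∀ p ∈ Spos, 0 < pairQ n (toQ n p) w := by
        intro p hp
        obtain ⟨hpS, hpx⟩ := Finset.mem_filter.mp hp
        rcases (hw p hpS).lt_or_eq with h | h
        · exact h
        · exact absurd (hxT p hpS h.symm) hpx.ne'
      set t₂ : ℚ := Spos.inf' hSposne
        (fun p => pairQ n (toQ n p) w / pairQ n (toQ n p) x) with ht₂
      have ht₂pos : 0 < t₂ := by
        rw [ht₂, Finset.lt_inf'_iff]
        intro p hp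
        exact div_pos (hposW2 p hp) (Finset.mem_filter.mp hp).2
      set w₂ : Fin n → ℚ := w - t₂ • x with hw₂def
      have hw₂pair : ∀ v : Fin n → ℚ,
          pairQ n v w₂ = pairQ n v w - t₂ * pairQ n v x := by
        intro v
        rw [hw₂def, pairQ_sub_right, pairQ_smul_right]
      have hw₂ : ∀ p ∈ S, 0 ≤ pairQ n (toQ n p) w₂ := by
        intro p hp
        rw [hw₂pair]
        rcases lt_or_ge 0 (pairQ n (toQ n p) x) with hpos | hneg
        · have hmem : p ∈ Spos := Finset.mem_filter.mpr ⟨hp, hpos⟩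
          have hle := Finset.inf'_le
            (fun p => pairQ n (toQ n p) w / pairQ n (toQ n p) x) hmem
          rw [le_div_iff₀ hpos] at hle
          nlinarith
        · nlinarith [hw p hp, mul_nonneg ht₂pos.le (neg_nonneg.mpr hneg)]
      have htight₂ : ∀ p ∈ S, pairQ n (toQ n p) w = 0 → pairQ n (toQ n p) w₂ = 0 := by
        intro p hp h
        rw [hw₂pair, h, hxT p hp h, mul_zero, sub_zero]
      obtain ⟨pm2, hpm2S, hpm2eq⟩ := Finset.exists_mem_eq_inf' hSposne
        (fun p => pairQ n (toQ n p) w / pairQ n (toQ n p) x)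
      have hpm2x : 0 < pairQ n (toQ n pm2) x := (Finset.mem_filter.mp hpm2S).2
      have hpm20 : pairQ n (toQ n pm2) w₂ = 0 := by
        have hcne : pairQ n (toQ n pm2) x ≠ 0 := hpm2x.ne'
        rw [hw₂pair, ht₂, hpm2eq]
        field_simp
        ring
      have hltrank2 : Module.finrank ℚ (tightSpace n S w₂) < d := by
        rw [← hrank]
        exact finrank_tightSpace_lt (tightSpace_lt htight₂ hxT
          (Finset.mem_filter.mp hpm2S).1 hpm20 hpm2x.ne')
      have hIH₂ : 0 ≤ pairQ n y w₂ :=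
        IH _ hltrank2 w₂ rfl hw₂
      rw [hw₁pair] at hIH₁
      rw [hw₂pair] at hIH₂
      by_contra hq
      push_neg at hq
      nlinarith [mul_nonneg ht₂pos.le hIH₁, mul_nonneg ht₁pos.le hIH₂,
        mul_pos ht₁pos ht₂pos]
    · -- Case B : the direction `-x` lies in σ
      set z : Fin n → ℚ := -x with hzdef
      have hzx : ∀ v : Fin n → ℚ, pairQ n v z = -pairQ n v x := by
        intro v; rw [hzdef, pairQ_neg_right]
      have hzS : ∀ p ∈ S, 0 ≤ pairQ n (toQ n p) z := by
        intro p hp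
        rw [hzx]
        by_contra hc
        push_neg at hc
        have : 0 < pairQ n (toQ n p) x := by linarith
        exact hSposne ⟨p, Finset.mem_filter.mpr ⟨hp, this⟩⟩
      have hzT : z ∈ tightSpace n S w := neg_mem hxT
      by_cases hcase : ∃ p ∈ S, 0 < pairQ n (toQ n p) w ∧ pairQ n (toQ n p) z = 0
      · -- B-i : `z` is tight on strictly more constraints
        obtain ⟨pc, hpcS, hpcw, hpcz⟩ := hcase
        have hltz : Module.finrank ℚ (tightSpace n S z) < d := by
          rw [← hrank]
          exact finrank_tightSpace_lt (tightSpace_lt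
            (fun p hp h => hzT p hp h) (self_mem_tightSpace S w) hpcS hpcz hpcw.ne')
        have hIHz : 0 ≤ pairQ n y z :=
          IH _ hltz z rfl hzS
        rw [hw₁pair] at hIH₁
        rw [hzx] at hIHz
        nlinarith [mul_nonneg ht₁pos.le hIHz]
      · -- B-ii
        push_neg at hcase
        have hzpos : ∀ p ∈ S, 0 < pairQ n (toQ n p) w → 0 < pairQ n (toQ n p) z := by
          intro p hp hpw
          exact (hzS p hp).lt_of_ne' (hcase p hp hpw)
        set Sw : Finset (Fin n → ℤ) :=
          S.filter (fun p => 0 < pairQ n (toQ n p) w) with hSw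
        have hSwne : Sw.Nonempty := ⟨p₀, Finset.mem_filter.mpr ⟨hp₀S, hp₀w⟩⟩
        set st : ℚ := Sw.inf' hSwne
          (fun p => pairQ n (toQ n p) z / pairQ n (toQ n p) w) with hst
        have hstpos : 0 < st := by
          rw [hst, Finset.lt_inf'_iff]
          intro p hp
          obtain ⟨hpS, hpw⟩ := Finset.mem_filter.mp hp
          exact div_pos (hzpos p hpS hpw) hpw
        set z₂ : Fin n → ℚ := z - st • w with hz₂def
        have hz₂pair : ∀ v : Fin n → ℚ,
            pairQ n v z₂ = pairQ n v z - st * pairQ n v w := by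
          intro v
          rw [hz₂def, pairQ_sub_right, pairQ_smul_right]
        have hz₂S : ∀ p ∈ S, 0 ≤ pairQ n (toQ n p) z₂ := by
          intro p hp
          rw [hz₂pair]
          rcases (hw p hp).lt_or_eq with hpw | hpw
          · have hmem : p ∈ Sw := Finset.mem_filter.mpr ⟨hp, hpw⟩
            have hle := Finset.inf'_le
              (fun p => pairQ n (toQ n p) z / pairQ n (toQ n p) w) hmem
            rw [le_div_iff₀ hpw] at hle
            nlinarith
          · rw [← hpw, mul_zero, sub_zero]
            exact hzS p hp
        obtain ⟨ps, hpsS, hpseq⟩ := Finset.exists_mem_eq_inf' hSwne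
          (fun p => pairQ n (toQ n p) z / pairQ n (toQ n p) w)
        have hpsw : 0 < pairQ n (toQ n ps) w := (Finset.mem_filter.mp hpsS).2
        have hps0 : pairQ n (toQ n ps) z₂ = 0 := by
          have hcne : pairQ n (toQ n ps) w ≠ 0 := hpsw.ne'
          rw [hz₂pair, hst, hpseq]
          field_simp
          ring
        have htightz₂ : ∀ p ∈ S, pairQ n (toQ n p) w = 0 →
            pairQ n (toQ n p) z₂ = 0 := by
          intro p hp h
          rw [hz₂pair, h, hzT p hp h, mul_zero, sub_zero]
        have hltz₂ : Module.finrank ℚ (tightSpace n S z₂) < d := by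
          rw [← hrank]
          exact finrank_tightSpace_lt (tightSpace_lt htightz₂
            (self_mem_tightSpace S w) (Finset.mem_filter.mp hpsS).1 hps0 hpsw.ne')
        have hIHz₂ : 0 ≤ pairQ n y z₂ :=
          IH _ hltz₂ z₂ rfl hz₂S
        by_cases h1s : 0 < 1 - t₁ * st
        · rw [hw₁pair] at hIH₁
          rw [hz₂pair, hzx] at hIHz₂
          by_contra hq
          push_neg at hq
          nlinarith [mul_nonneg ht₁pos.le hIHz₂]
        · exfalso
          push_neg at h1s
          have hvid : w₁ + t₁ • z₂ = (1 - t₁ * st) • w := by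
            rw [hw₁def, hz₂def, hzdef]
            funext i
            simp only [Pi.add_apply, Pi.sub_apply, Pi.smul_apply, Pi.neg_apply,
              smul_eq_mul]
            ring
          have hmix : ∀ p ∈ S, 0 ≤ (1 - t₁ * st) * pairQ n (toQ n p) w := by
            intro p hp
            have : pairQ n (toQ n p) (w₁ + t₁ • z₂) =
                pairQ n (toQ n p) w₁ + t₁ * pairQ n (toQ n p) z₂ := by
              rw [pairQ_add_right, pairQ_smul_right]
            rw [hvid, pairQ_smul_right] at this
            rw [this]
            exact add_nonneg (hw₁ p hp) (mul_nonneg ht₁pos.le (hz₂S p hp))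
          have h1s0 : 1 - t₁ * st = 0 := by
            have := hmix p₀ hp₀S
            nlinarith
          rw [h1s0, zero_smul] at hvid
          have hw₁sig : w₁ ∈ sigma n P := (mem_sigma_iff hS).mpr hw₁
          have hmw₁ : -w₁ = t₁ • z₂ := by
            have h2 := hvid
            rw [add_eq_zero_iff_neg_eq] at h2
            exact h2
          have hnegw₁sig : -w₁ ∈ sigma n P := by
            apply (mem_sigma_iff hS).mpr
            intro p hp
            rw [hmw₁, pairQ_smul_right]
            exact mul_nonneg ht₁pos.le (hz₂S p hp)
          have hw₁0 : w₁ = 0 := sigma_pointed hgen hw₁sig hnegw₁sig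
          have hz₂0 : z₂ = 0 := by
            have h1 : t₁ • z₂ = 0 := by rw [← hmw₁, hw₁0, neg_zero]
            rcases smul_eq_zero.mp h1 with h | h
            · exact absurd h ht₁pos.ne'
            · exact h
          apply hxspan
          have hzsw : z = st • w := by
            have h2 : z - st • w = 0 := by rw [← hz₂def]; exact hz₂0
            exact sub_eq_zero.mp h2
          refine Submodule.mem_span_singleton.mpr ⟨-st, ?_⟩
          rw [neg_smul, ← hzsw, hzdef, neg_neg]

end Mink2

section LemB

variable {n : ℕ} {P : AddSubmonoid (Fin n → ℤ)}

/-- Biduality: a vector pairing nonnegatively with all primitive extremal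
generators of `σ` lies in `σ∨`. -/
lemma mem_coneOf_of_goodDual (hgen : AddSubgroup.closure (P : Set (Fin n → ℤ)) = ⊤)
    {S : Finset (Fin n → ℤ)} (hS : AddSubmonoid.closure (S : Set (Fin n → ℤ)) = P)
    {y : Fin n → ℚ}
    (hy : ∀ u : Fin n → ℤ, IsExtGenOfSigma n P u → 0 ≤ pairQ n y (toQ n u)) :
    y ∈ coneOf n P := by
  classical
  by_contra hyc
  set a : Fin S.card → (Fin n → ℚ) :=
    fun i => toQ n ((S.equivFin.symm i : { x // x ∈ S }) : Fin n → ℤ) with ha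
  have hmemP : ∀ i, ((S.equivFin.symm i : { x // x ∈ S }) : Fin n → ℤ) ∈ P := by
    intro i
    rw [← hS]
    exact AddSubmonoid.subset_closure (S.equivFin.symm i).2
  have hnc : ¬ ∃ c : Fin S.card → ℚ, (∀ i, 0 ≤ c i) ∧ y = ∑ i, c i • a i := by
    rintro ⟨c, hc, rfl⟩
    apply hyc
    apply Finset.sum_induction _ (fun v => v ∈ coneOf n P)
      (fun u v hu hv => add_mem_coneOf hu hv) zero_mem_coneOf
    intro i _
    exact smul_mem_coneOf (hc i) (toQ_mem_coneOf (hmemP i))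
  obtain ⟨w, hw, hyw⟩ := farkas _ a _ hnc
  have hwsig : w ∈ sigma n P := by
    apply (mem_sigma_iff hS).mpr
    intro p hp
    have := hw (S.equivFin ⟨p, hp⟩)
    rw [ha] at this
    simp only [Equiv.symm_apply_apply] at this
    exact this
  have := pair_nonneg_on_sigma hgen hS y hy w hwsig
  linarith

end LemB

section LemA

variable {n : ℕ} {P : AddSubmonoid (Fin n → ℤ)}

lemma primitive_ne_zero {r : Fin n → ℤ} (h : IsPrimitive n r) : r ≠ 0 := by
  intro hr
  rw [IsPrimitive, hr] at h
  have h0 : Finset.univ.gcd (0 : Fin n → ℤ) = 0 :=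
    Finset.gcd_eq_zero_iff.mpr (fun i _ => rfl)
  rw [h0] at h
  exact zero_ne_one h

/-- Key lemma: the primitive vector of an affine ray lies on the
one-dimensional intersection of the other facets. -/
lemma affineRay_mem_facetInter (hgen : AddSubgroup.closure (P : Set (Fin n → ℤ)) = ⊤)
    {S : Finset (Fin n → ℤ)} (hS : AddSubmonoid.closure (S : Set (Fin n → ℤ)) = P)
    (hpt : IsPointed n (coneOf n P))
    {u r : Fin n → ℤ} (hu : IsAffineFacet n P u) (hr : IsAffineRay n P u r) :
    toQ n r ∈ facetInter n P u := by
  classical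
  obtain ⟨huext, hsat, v, hvne, hvfacet⟩ := hu
  obtain ⟨hrprim, hrext, hrnot, hrP, hru, hhole⟩ := hr
  -- `v` lies in all the other facets
  have hvmem : v ∈ facetInter n P u := by
    rw [hvfacet]; exact mem_rayOf_self v
  have hvprop : ∀ u'' : Fin n → ℤ, IsExtGenOfSigma n P u'' → u'' ≠ u →
      v ∈ coneOf n P ∧ pairQ n v (toQ n u'') = 0 := by
    intro u'' h1 h2
    have := Set.mem_iInter₂.mp hvmem u'' ⟨h1, h2⟩
    exact this
  -- there exists at least one other extremal generator
  have hexother : ∃ u₁ : Fin n → ℤ, IsExtGenOfSigma n P u₁ ∧ u₁ ≠ u := by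
    by_contra hc
    push_neg at hc
    have huniv : facetInter n P u = Set.univ := by
      apply Set.eq_univ_of_forall
      intro x
      apply Set.mem_iInter₂.mpr
      rintro u' ⟨h1, h2⟩
      exact absurd (hc u' h1) h2
    rw [hvfacet] at huniv
    have := neg_not_mem_rayOf hvne
    rw [huniv] at this
    exact this (Set.mem_univ _)
  obtain ⟨u₁, hu₁ext, hu₁ne⟩ := hexother
  have hvC : v ∈ coneOf n P := (hvprop u₁ hu₁ext hu₁ne).1
  -- the pairing of `v` with `u` is positive
  have hvu_nonneg : 0 ≤ pairQ n v (toQ n u) := huext.2.2.1 v hvC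
  have hvu_pos : 0 < pairQ n v (toQ n u) := by
    rcases hvu_nonneg.lt_or_eq with h | h
    · exact h
    · exfalso
      have hGood : ∀ u'' : Fin n → ℤ, IsExtGenOfSigma n P u'' →
          0 ≤ pairQ n (-v) (toQ n u'') := by
        intro u'' h''
        by_cases hcase : u'' = u
        · rw [hcase, pairQ_neg_left, ← h, neg_zero]
        · rw [pairQ_neg_left, (hvprop u'' h'' hcase).2, neg_zero]
      have := mem_coneOf_of_goodDual hgen hS hGood
      have hv0 := hpt v hvC this
      exact hvne hv0
  set t : ℚ := (pairQ n v (toQ n u))⁻¹ with ht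
  have htpos : 0 < t := inv_pos.mpr hvu_pos
  set yy : Fin n → ℚ := toQ n r - t • v with hyy
  have hru' : pairQ n (toQ n r) (toQ n u) = 1 := by
    rw [pairQ_toQ, hru]; norm_num
  have hyG : ∀ u'' : Fin n → ℤ, IsExtGenOfSigma n P u'' →
      0 ≤ pairQ n yy (toQ n u'') := by
    intro u'' h''
    rw [hyy, pairQ_sub_left, pairQ_smul_left]
    by_cases hcase : u'' = u
    · rw [hcase, hru', ht, inv_mul_cancel₀ hvu_pos.ne', sub_self]
    · rw [(hvprop u'' h'' hcase).2, mul_zero, sub_zero]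
      exact h''.2.2.1 (toQ n r) (toQ_mem_coneOf hrP)
  have hyC : yy ∈ coneOf n P := mem_coneOf_of_goodDual hgen hS hyG
  have htvC : t • v ∈ coneOf n P := smul_mem_coneOf htpos.le hvC
  have hsum : yy + t • v ∈ rayOf n (toQ n r) := by
    rw [hyy, sub_add_cancel]
    exact mem_rayOf_self _
  obtain ⟨-, c, hc0, htv⟩ := hrext.2.2 yy hyC (t • v) htvC hsum
  have hcne : c ≠ 0 := by
    intro h
    rw [h, zero_smul] at htv
    have : v = 0 := by
      have := congrArg (fun x => t⁻¹ • x) htv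
      simpa [smul_smul, inv_mul_cancel₀ htpos.ne'] using this
    exact hvne this
  have hcpos : 0 < c := lt_of_le_of_ne hc0 (Ne.symm hcne)
  have hrv : toQ n r = (t / c) • v := by
    have h5 := congrArg (fun x => c⁻¹ • x) htv
    simp only [smul_smul] at h5
    rw [inv_mul_cancel₀ hcne, one_smul] at h5
    rw [← h5]
    congr 1
    rw [div_eq_mul_inv, mul_comm]
  rw [hvfacet]
  exact ⟨t / c, div_nonneg htpos.le hcpos.le, hrv⟩

lemma affineRay_pair_zero (hgen : AddSubgroup.closure (P : Set (Fin n → ℤ)) = ⊤)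
    {S : Finset (Fin n → ℤ)} (hS : AddSubmonoid.closure (S : Set (Fin n → ℤ)) = P)
    (hpt : IsPointed n (coneOf n P))
    {u r : Fin n → ℤ} (hu : IsAffineFacet n P u) (hr : IsAffineRay n P u r)
    {u'' : Fin n → ℤ} (h'' : IsExtGenOfSigma n P u'') (hne : u'' ≠ u) :
    pairQ n (toQ n r) (toQ n u'') = 0 := by
  have := affineRay_mem_facetInter hgen hS hpt hu hr
  exact (Set.mem_iInter₂.mp this u'' ⟨h'', hne⟩).2

/-- Two affine rays over the same affine facet coincide. -/
lemma affineRay_unique (hgen : AddSubgroup.closure (P : Set (Fin n → ℤ)) = ⊤)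
    {S : Finset (Fin n → ℤ)} (hS : AddSubmonoid.closure (S : Set (Fin n → ℤ)) = P)
    (hpt : IsPointed n (coneOf n P))
    {u r r' : Fin n → ℤ} (hu : IsAffineFacet n P u) (hr : IsAffineRay n P u r)
    (hr' : IsAffineRay n P u r') : r' = r := by
  obtain ⟨v, hvne, hvfacet⟩ := hu.2.2
  have h1 := affineRay_mem_facetInter hgen hS hpt hu hr
  have h2 := affineRay_mem_facetInter hgen hS hpt hu hr'
  rw [hvfacet] at h1 h2
  obtain ⟨c, hc0, hc⟩ := h1
  obtain ⟨c', hc'0, hc'⟩ := h2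
  have hrne : toQ n r ≠ 0 := fun h => primitive_ne_zero hr.1 (toQ_eq_zero_iff.mp h)
  have hr'ne : toQ n r' ≠ 0 := fun h => primitive_ne_zero hr'.1 (toQ_eq_zero_iff.mp h)
  have hcpos : 0 < c := by
    rcases hc0.lt_or_eq with h | h
    · exact h
    · exfalso; apply hrne; rw [hc, ← h, zero_smul]
  have hc'pos : 0 < c' := by
    rcases hc'0.lt_or_eq with h | h
    · exact h
    · exfalso; apply hr'ne; rw [hc', ← h, zero_smul]
  have hprop : toQ n r' = (c' / c) • toQ n r := by
    rw [hc', hc, smul_smul]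
    congr 1
    field_simp
  exact primitive_eq_of_proportional hr.1 hr'.1 (div_pos hc'pos hcpos) hprop

end LemA


end ToricML

open ToricML in
theorem stmt_13 (K : Type) [Field K] [CharZero K] [IsAlgClosed K]
    (n : ℕ) (hn : 1 ≤ n) (P : AddSubmonoid (Fin n → ℤ))
    (hfg : P.FG) (hgen : AddSubgroup.closure (P : Set (Fin n → ℤ)) = ⊤)
    (hpt : IsPointed n (coneOf n P)) (s : Finset (Fin n → ℤ))
    (hs : ∀ r ∈ s, IsAffineRayAbs n P r) :
    LinearIndependent ℚ (fun r : s => toQ n (r : Fin n → ℤ)) := by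
  classical
  obtain ⟨Sf, hSf⟩ := hfg
  have hchoose : ∀ r : s, ∃ u, IsAffineFacet n P u ∧ IsAffineRay n P u (r : Fin n → ℤ) :=
    fun r => hs r r.2
  choose U hUfacet hUray using hchoose
  rw [Fintype.linearIndependent_iff]
  intro g hg j
  have hpair := congrArg (fun vv => pairQ n vv (toQ n (U j))) hg
  simp only [pairQ_zero_left] at hpair
  rw [pairQ_sum_left] at hpair
  simp only [pairQ_smul_left] at hpair
  have key : ∀ i : s, i ≠ j → pairQ n (toQ n (i : Fin n → ℤ)) (toQ n (U j)) = 0 := by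
    intro i hij
    refine affineRay_pair_zero hgen hSf hpt (hUfacet i) (hUray i) (hUfacet j).1 ?_
    intro hUeq
    apply hij
    apply Subtype.ext
    exact affineRay_unique hgen hSf hpt (hUfacet j) (hUray j)
      (by rw [hUeq]; exact hUray i)
  have hjj : pairQ n (toQ n (j : Fin n → ℤ)) (toQ n (U j)) = 1 := by
    rw [pairQ_toQ, (hUray j).2.2.2.2.1]
    norm_num
  rw [Finset.sum_eq_single j (fun i _ hij => by rw [key i hij, mul_zero])
    (fun h => absurd (Finset.mem_univ j) h)] at hpair
  rw [hjj, mul_one] at hpair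
  exact hpair
end
end

section
/- Assume σ∨ is pointed. Let δ be an M-homogeneous locally nilpotent derivation of K[P] with a slice whose kernel is the subalgebra corresponding to a facet F of σ∨, and let δ' be an M-homogeneous locally nilpotent derivation of K[P] corresponding to a Demazure root of the extremal ray of σ associated to another almost saturated facet F' ≠ F of σ∨. Then δ + δ' is a locally nilpotent derivation of K[P] admitting a slice. -/
set_option synthInstance.maxHeartbeats 1000000
set_option maxHeartbeats 1000000

noncomputable section

namespace ToricMLAux
open ToricML Finsupp

variable {K : Type} [Field K] {n : ℕ} {P : AddSubmonoid (Fin n → ℤ)}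

lemma pairZ_add_left (a b v : Fin n → ℤ) :
    pairZ n (a + b) v = pairZ n a v + pairZ n b v := by
  simp [pairZ, add_mul, Finset.sum_add_distrib]

lemma pairZ_neg_left (a v : Fin n → ℤ) : pairZ n (-a) v = -pairZ n a v := by
  simp [pairZ, Finset.sum_neg_distrib]

lemma pairZ_nsmul_left (k : ℕ) (a v : Fin n → ℤ) :
    pairZ n (k • a) v = (k : ℤ) * pairZ n a v := by
  simp [pairZ, Finset.mul_sum, mul_assoc]

lemma pairZ_nonneg_of_sigma {v : Fin n → ℤ} (hv : toQ n v ∈ sigma n P)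
    {m : Fin n → ℤ} (hm : m ∈ P) : 0 ≤ pairZ n m v := by
  have h1 : toQ n m ∈ coneOf n P := ⟨1, zero_le_one, m, hm, (one_smul _ _).symm⟩
  have h2 := hv (toQ n m) h1
  have h3 : pairQ n (toQ n m) (toQ n v) = ((pairZ n m v : ℤ) : ℚ) := by
    simp [pairQ, pairZ, toQ]
  rw [h3] at h2
  exact_mod_cast h2

lemma mem_P_of_supp (f : monAlg K n P) {m : Fin n → ℤ}
    (hm : m ∈ (f : Laurent K n).coeff.support) : m ∈ P := f.2 m hm

lemma monAlg_decomp (f : monAlg K n P) :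
    f = ∑ m ∈ (f : Laurent K n).coeff.support.attach,
      ((f : Laurent K n).coeff m.1) • chiP K n P m.1 (mem_P_of_supp f m.2) := by
  apply Subtype.ext
  rw [AddSubmonoidClass.coe_finset_sum]
  simp only [SetLike.val_smul, chiP, chi, AddMonoidAlgebra.smul_single',
    smul_eq_mul, mul_one]
  rw [Finset.sum_attach _ (fun m => AddMonoidAlgebra.single m ((f : Laurent K n).coeff m))]
  exact (AddMonoidAlgebra.sum_coeff_single (f : Laurent K n)).symm

lemma homog_val {δ : Derivation K (monAlg K n P) (monAlg K n P)} {e : Fin n → ℤ}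
    (h : IsHomog K n P δ e) (f : monAlg K n P) :
    ((δ f : monAlg K n P) : Laurent K n)
      = ∑ m ∈ (f : Laurent K n).coeff.support.attach,
          AddMonoidAlgebra.single (m.1 + e)
            (((f : Laurent K n).coeff m.1) * Classical.choose (h m.1 (mem_P_of_supp f m.2))) := by
  conv_lhs => rw [monAlg_decomp f]
  rw [map_sum, AddSubmonoidClass.coe_finset_sum]
  refine Finset.sum_congr rfl ?_
  intro m _
  rw [Derivation.map_smul, SetLike.val_smul]
  have hc := Classical.choose_spec (h m.1 (mem_P_of_supp f m.2))
  conv_lhs => rw [hc]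
  rw [AddMonoidAlgebra.smul_single']

lemma homog_supp {δ : Derivation K (monAlg K n P) (monAlg K n P)} {e : Fin n → ℤ}
    (h : IsHomog K n P δ e) (f : monAlg K n P) {x : Fin n → ℤ}
    (hx : x ∈ ((δ f : monAlg K n P) : Laurent K n).coeff.support) :
    ∃ m ∈ (f : Laurent K n).coeff.support, x = m + e := by
  classical
  rw [homog_val h f, AddMonoidAlgebra.coeff_sum] at hx
  have h2 := Finsupp.support_finset_sum hx
  obtain ⟨m, hm, hx2⟩ := Finset.mem_biUnion.mp h2
  rw [AddMonoidAlgebra.coeff_single] at hx2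
  have h3 := Finsupp.support_single_subset hx2
  rw [Finset.mem_singleton] at h3
  exact ⟨m.1, m.2, h3⟩

end ToricMLAux

open ToricML in
theorem stmt_19 (K : Type) [Field K] [CharZero K] [IsAlgClosed K]
    (n : ℕ) (hn : 1 ≤ n) (P : AddSubmonoid (Fin n → ℤ))
    (hfg : P.FG) (hgen : AddSubgroup.closure (P : Set (Fin n → ℤ)) = ⊤)
    (hpt : IsPointed n (coneOf n P)) (u u' : Fin n → ℤ)
    (hu : IsExtGenOfSigma n P u) (hne : u' ≠ u)
    (hsat' : ∃ p : Fin n → ℤ, IsSatPoint n P p ∧ pairZ n p u' = 0)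
    (δ δ' : Derivation K (monAlg K n P) (monAlg K n P)) (e e' : Fin n → ℤ)
    (hδh : IsHomog K n P δ e) (hδl : IsLND δ) (hδs : HasSlice δ)
    (hker : ∀ f : monAlg K n P, δ f = 0 ↔ ∀ m ∈ (f : Laurent K n).coeff.support, pairZ n m u = 0)
    (hdem : IsDemazureRoot n P u' e')
    (hδ'l : IsLND δ') (hδ'h : IsHomog K n P δ' e')
    (hδ'form : ∀ (m : Fin n → ℤ) (hm : m ∈ P),
      ((δ' (chiP K n P m hm) : monAlg K n P) : Laurent K n)
        = AddMonoidAlgebra.single (m + e') ((pairZ n m u' : ℤ) : K)) :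
    IsLND (δ + δ') ∧ HasSlice (δ + δ') := by
  classical
  obtain ⟨s, hs⟩ := hδs
  have hδs1 : ((δ s : monAlg K n P) : Laurent K n) = AddMonoidAlgebra.single 0 1 := by
    rw [hs, OneMemClass.coe_one, AddMonoidAlgebra.one_def]
  have h0 : (0 : Fin n → ℤ) ∈ ((δ s : monAlg K n P) : Laurent K n).coeff.support := by
    rw [hδs1, AddMonoidAlgebra.coeff_single, Finsupp.support_single_ne_zero _ one_ne_zero]
    exact Finset.mem_singleton_self _
  obtain ⟨m₀, hm₀s, hm₀e⟩ := ToricMLAux.homog_supp hδh s h0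
  have hm₀P : m₀ ∈ P := ToricMLAux.mem_P_of_supp s hm₀s
  have he : e = -m₀ := eq_neg_of_add_eq_zero_right hm₀e.symm
  have hval := ToricMLAux.homog_val hδh s
  rw [hδs1] at hval
  have hkey : (s : Laurent K n).coeff m₀ * Classical.choose (hδh m₀ hm₀P) = 1 := by
    have happ := congrArg (fun g : Laurent K n => g.coeff 0) hval
    simp only [AddMonoidAlgebra.coeff_single, AddMonoidAlgebra.coeff_sum,
      Finsupp.finset_sum_apply, Finsupp.single_eq_same] at happ
    rw [Finset.sum_eq_single (⟨m₀, hm₀s⟩ : {x // x ∈ (s : Laurent K n).coeff.support})] at happ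
    · rw [Finsupp.single_apply, if_pos hm₀e.symm] at happ
      exact happ.symm
    · intro b _ hbne
      apply Finsupp.single_eq_of_ne
      intro hb0
      apply hbne
      apply Subtype.ext
      have : b.1 + e = m₀ + e := by rw [← hb0, ← hm₀e]
      exact add_right_cancel this
    · intro habs
      exact absurd (Finset.mem_attach _ _) habs
  set c0 := Classical.choose (hδh m₀ hm₀P) with hc0def
  have hc0spec := Classical.choose_spec (hδh m₀ hm₀P)
  have hc0 : c0 ≠ 0 := fun h => one_ne_zero (by rw [← hkey, h, mul_zero])
  have hchival : ((chiP K n P m₀ hm₀P : monAlg K n P) : Laurent K n).coeff.support = {m₀} := by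
    simp only [chiP, chi, AddMonoidAlgebra.coeff_single]
    exact Finsupp.support_single_ne_zero _ one_ne_zero
  have hm₀u : pairZ n m₀ u ≠ 0 := by
    intro h0
    have hz : δ (chiP K n P m₀ hm₀P) = 0 := by
      apply (hker _).mpr
      intro m hm
      rw [hchival, Finset.mem_singleton] at hm
      rwa [hm]
    have h1 := Subtype.ext_iff.mp hz
    rw [hc0spec, ZeroMemClass.coe_zero] at h1
    exact hc0 (AddMonoidAlgebra.single_eq_zero.mp h1)
  have keyP : ∀ m, m ∈ P → pairZ n m u ≠ 0 → m + e ∈ P := by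
    intro m hm hmu
    obtain ⟨c, hc⟩ := hδh m hm
    have hδne : δ (chiP K n P m hm) ≠ 0 := by
      intro hz
      refine hmu ((hker _).mp hz m ?_)
      simp only [chiP, chi, AddMonoidAlgebra.coeff_single]
      rw [Finsupp.support_single_ne_zero _ one_ne_zero]
      exact Finset.mem_singleton_self _
    have hcne : c ≠ 0 := by
      intro h
      apply hδne
      apply Subtype.ext
      rw [hc, h, AddMonoidAlgebra.single_zero, ZeroMemClass.coe_zero]
    have hmem : m + e ∈ ((δ (chiP K n P m hm) : monAlg K n P) : Laurent K n).coeff.support := by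
      rw [hc, AddMonoidAlgebra.coeff_single, Finsupp.support_single_ne_zero _ hcne]
      exact Finset.mem_singleton_self _
    exact ToricMLAux.mem_P_of_supp _ hmem
  obtain ⟨hu'ext, he'u', he'rest⟩ := hdem
  have hu'sig : toQ n u' ∈ sigma n P := hu'ext.2.2.1
  have husig : toQ n u ∈ sigma n P := hu.2.2.1
  have he'u : 0 ≤ pairZ n e' u := he'rest u hu (fun h => hne h.symm)
  have stepP : ∀ m, m ∈ P → pairZ n m u' ≠ 0 → m + e' ∈ P := by
    intro m hm hne0
    have h1 := hδ'form m hm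
    have hmem : m + e' ∈ ((δ' (chiP K n P m hm) : monAlg K n P) : Laurent K n).coeff.support := by
      rw [h1, AddMonoidAlgebra.coeff_single, Finsupp.support_single_ne_zero]
      · exact Finset.mem_singleton_self _
      · exact_mod_cast hne0
    exact ToricMLAux.mem_P_of_supp _ hmem
  have keyP' : ∀ m, m ∈ P → pairZ n m u ≠ 0 → pairZ n m₀ u' ≤ pairZ n m u' := by
    intro m hm hmu
    have hP := keyP m hm hmu
    have h2 := ToricMLAux.pairZ_nonneg_of_sigma hu'sig hP
    rw [ToricMLAux.pairZ_add_left, he, ToricMLAux.pairZ_neg_left] at h2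
    linarith
  have hm₀u1 : 1 ≤ pairZ n m₀ u := by
    have := ToricMLAux.pairZ_nonneg_of_sigma husig hm₀P
    omega
  have hd0 : 0 ≤ pairZ n m₀ u' := ToricMLAux.pairZ_nonneg_of_sigma hu'sig hm₀P
  have hdzero : pairZ n m₀ u' = 0 := by
    by_contra hdne
    have hdpos : 0 < pairZ n m₀ u' := lt_of_le_of_ne hd0 (Ne.symm hdne)
    set d : ℤ := pairZ n m₀ u' with hd
    have hpairk : ∀ k : ℕ, pairZ n (m₀ + k • e') u' = d - k := by
      intro k
      rw [ToricMLAux.pairZ_add_left, ToricMLAux.pairZ_nsmul_left, he'u']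
      ring
    have chain : ∀ k : ℕ, (k : ℤ) ≤ d → m₀ + k • e' ∈ P := by
      intro k
      induction k with
      | zero => intro _; simpa using hm₀P
      | succ k ih =>
        intro hk
        have hk1 : (k : ℤ) < d := by push_cast at hk; omega
        have hPk := ih hk1.le
        have hstep := stepP _ hPk (by rw [hpairk]; omega)
        rw [succ_nsmul, ← add_assoc]
        exact hstep
    have hmD := chain d.toNat (by omega)
    have hpD : pairZ n (m₀ + d.toNat • e') u' = 0 := by
      rw [hpairk]; omega
    have hDu : pairZ n (m₀ + d.toNat • e') u = 0 := by
      by_contra h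
      have h2 := keyP' _ hmD h
      rw [hpD] at h2
      omega
    have hDval : pairZ n (m₀ + d.toNat • e') u = pairZ n m₀ u + d * pairZ n e' u := by
      rw [ToricMLAux.pairZ_add_left, ToricMLAux.pairZ_nsmul_left]
      congr 2
      omega
    have hmul : 0 ≤ d * pairZ n e' u := mul_nonneg hdpos.le he'u
    rw [hDu] at hDval
    linarith
  have hδ'chi0 : δ' (chiP K n P m₀ hm₀P) = 0 := by
    apply Subtype.ext
    rw [hδ'form m₀ hm₀P, hdzero, ZeroMemClass.coe_zero, Int.cast_zero, AddMonoidAlgebra.single_zero]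
  have hslice : HasSlice (δ + δ') := by
    refine ⟨((s : Laurent K n).coeff m₀) • chiP K n P m₀ hm₀P, ?_⟩
    rw [Derivation.add_apply, Derivation.map_smul, Derivation.map_smul, hδ'chi0, smul_zero,
      add_zero]
    apply Subtype.ext
    rw [SetLike.val_smul, hc0spec, AddMonoidAlgebra.smul_single', ← hc0def, hkey,
      OneMemClass.coe_one, AddMonoidAlgebra.one_def, show m₀ + e = 0 from hm₀e.symm]
  have hLND : IsLND (δ + δ') := by
    intro f
    set t : ℤ := pairZ n e' u + 1 with ht
    set φ : (Fin n → ℤ) → ℤ := fun m => pairZ n m u + t * pairZ n m u' with hφ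
    have hφ_nonneg : ∀ m, m ∈ P → 0 ≤ φ m := by
      intro m hm
      have h1 := ToricMLAux.pairZ_nonneg_of_sigma husig hm
      have h2 := ToricMLAux.pairZ_nonneg_of_sigma hu'sig hm
      have h3 : 0 ≤ t * pairZ n m u' := mul_nonneg (by omega) h2
      simp only [hφ]
      omega
    have hφ_add : ∀ a b, φ (a + b) = φ a + φ b := by
      intro a b
      simp only [hφ, ToricMLAux.pairZ_add_left]
      ring
    have hφ_e : φ e ≤ -1 := by
      have h1 : pairZ n e u' = 0 := by
        rw [he, ToricMLAux.pairZ_neg_left, hdzero, neg_zero]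
      have h2 : pairZ n e u = -pairZ n m₀ u := by
        rw [he, ToricMLAux.pairZ_neg_left]
      simp only [hφ, h1, h2, mul_zero, add_zero]
      omega
    have hφ_e' : φ e' ≤ -1 := by
      simp only [hφ, he'u']
      omega
    have hstep : ∀ (g : monAlg K n P) (B : ℤ),
        (∀ m ∈ (g : Laurent K n).coeff.support, φ m ≤ B) →
        ∀ m ∈ (((δ + δ') g : monAlg K n P) : Laurent K n).coeff.support, φ m ≤ B - 1 := by
      intro g B hB m hm
      rw [Derivation.add_apply, Subalgebra.coe_add, AddMonoidAlgebra.coeff_add] at hm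
      rcases Finset.mem_union.mp (Finsupp.support_add hm) with h | h
      · obtain ⟨m', hm', rfl⟩ := ToricMLAux.homog_supp hδh g h
        have := hB m' hm'
        rw [hφ_add]
        linarith [hφ_e]
      · obtain ⟨m', hm', rfl⟩ := ToricMLAux.homog_supp hδ'h g h
        have := hB m' hm'
        rw [hφ_add]
        linarith [hφ_e']
    have iter : ∀ (k : ℕ) (g : monAlg K n P) (B : ℤ),
        (∀ m ∈ (g : Laurent K n).coeff.support, φ m ≤ B) →
        ∀ m ∈ ((((δ + δ').toLinearMap ^ k) g : monAlg K n P) : Laurent K n).coeff.support,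
          φ m ≤ B - k := by
      intro k
      induction k with
      | zero =>
        intro g B hB m hm
        simp only [pow_zero, Module.End.one_apply] at hm
        simpa using hB m hm
      | succ k ih =>
        intro g B hB m hm
        rw [pow_succ, Module.End.mul_apply] at hm
        have h2 := ih ((δ + δ') g) (B - 1) (hstep g B hB) m hm
        push_cast
        push_cast at h2
        linarith
    set N : ℕ := (f : Laurent K n).coeff.support.sup (fun m => (φ m).toNat) with hN
    refine ⟨N + 1, ?_⟩
    have hB0 : ∀ m ∈ (f : Laurent K n).coeff.support, φ m ≤ (N : ℤ) := by
      intro m hm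
      have h1 : (φ m).toNat ≤ N := Finset.le_sup (f := fun m => (φ m).toNat) hm
      omega
    have hfin := iter (N + 1) f N hB0
    have hempty : ((((δ + δ').toLinearMap ^ (N + 1)) f : monAlg K n P) : Laurent K n).coeff.support
        = ∅ := by
      rw [Finset.eq_empty_iff_forall_notMem]
      intro m hm
      have h1 := hfin m hm
      have h2 := hφ_nonneg m (ToricMLAux.mem_P_of_supp _ hm)
      push_cast at h1
      omega
    exact Subtype.ext (AddMonoidAlgebra.coeff_injective (by rw [Finsupp.support_eq_empty.mp hempty]; rfl))
  exact ⟨hLND, hslice⟩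
end
end
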